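/- arXiv:1703.07847 — 5 statements merged into one kernel-verified Lean document; each statement's English description precedes it below -/
import Mathlib

section
/- Every non-degenerate symmetric bilinear form on a finite-dimensional vector space over F_2 is congruent to either the identity matrix I_n or (if n is even) the block-diagonal matrix λ_n consisting of n/2 copies of the 2×2 matrix [[0,1],[1,0]], and these two forms are not congruent to each other when both exist: the form I_n has a vector v with v·v = 1 while every vector v for λ_n satisfies v·v = 0. -/
open Matrix

/-- The `n × n` matrix over `F_2` consisting of `n/2` diagonal blocks
`[[0,1],[1,0]]` (for `n` even): entry `(i,j)` is `1` iff `i` and `j` lie in the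
same pair `{2k, 2k+1}` and `i ≠ j`. -/
def hypMat (n : ℕ) : Matrix (Fin n) (Fin n) (ZMod 2) :=
  fun i j => if (i : ℕ) / 2 = (j : ℕ) / 2 ∧ i ≠ j then 1 else 0

/-!
Let `B v w = v ⬝ᵥ Λ *ᵥ w`. A family of `n` vectors with invertible Gram matrix `G` is a basis,
and the matrix `M` of its columns satisfies `Mᵀ Λ M = G`. A family with invertible Gram matrix
also splits off orthogonally, `B` staying non-degenerate on its orthogonal complement, so Gram
matrices are built by induction on the dimension.

If `B` is alternating, splitting off hyperbolic pairs `e, f` (`B e f = 1`) gives `hypMat n`.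
Otherwise split off vectors `x` with `B x x = 1`. When `x^⊥` is alternating and nonzero, replace
`x` by `x + e + f` for a hyperbolic pair `e, f` in `x^⊥`: it still has square `1`, and its
orthogonal complement contains `x + e`, of square `1`, hence is not alternating.

In characteristic `2` a symmetric matrix with zero diagonal is `U + Uᵀ`, so its quadratic form
vanishes; this applies to `hypMat n`.
-/

open Module Submodule
open LinearMap (BilinForm)

section hypMat

variable {n : ℕ}

theorem hypMat_isSymm (n : ℕ) : (hypMat n).IsSymm := by
  ext i j
  simp only [hypMat, transpose_apply, eq_comm, ne_comm]

theorem hypMat_apply_self (i : Fin n) : hypMat n i i = 0 := by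
  simp [hypMat]

theorem hypMat_eq_zero_of_div_two_ne {i j : Fin n} (h : (i : ℕ) / 2 ≠ j / 2) :
    hypMat n i j = 0 :=
  if_neg fun h' => h h'.1

@[simp] theorem hypMat_zero_zero : hypMat (n + 2) 0 0 = 0 := hypMat_apply_self 0
@[simp] theorem hypMat_one_one : hypMat (n + 2) 1 1 = 0 := hypMat_apply_self 1
@[simp] theorem hypMat_zero_one : hypMat (n + 2) 0 1 = 1 := by simp [hypMat]
@[simp] theorem hypMat_one_zero : hypMat (n + 2) 1 0 = 1 := by simp [hypMat]

@[simp] theorem hypMat_succ_succ (i j : Fin n) :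
    hypMat (n + 2) i.succ.succ j.succ.succ = hypMat n i j := by
  simp only [hypMat, Fin.val_succ, ne_eq, Fin.succ_inj]
  congr 2
  simp only [eq_iff_iff]
  omega

@[simp] theorem hypMat_zero_succ_succ (j : Fin n) : hypMat (n + 2) 0 j.succ.succ = 0 :=
  hypMat_eq_zero_of_div_two_ne (by simp only [Fin.val_zero, Fin.val_succ]; omega)

@[simp] theorem hypMat_one_succ_succ (j : Fin n) : hypMat (n + 2) 1 j.succ.succ = 0 :=
  hypMat_eq_zero_of_div_two_ne (by simp only [Fin.val_one, Fin.val_succ]; omega)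

@[simp] theorem hypMat_succ_succ_zero (i : Fin n) : hypMat (n + 2) i.succ.succ 0 = 0 := by
  rw [(hypMat_isSymm _).apply]; simp

@[simp] theorem hypMat_succ_succ_one (i : Fin n) : hypMat (n + 2) i.succ.succ 1 = 0 := by
  rw [(hypMat_isSymm _).apply]; simp

theorem hypMat_mul_self : ∀ n, Even n → hypMat n * hypMat n = 1
  | 0, _ => Subsingleton.elim _ _
  | 1, h => absurd h (by decide)
  | n + 2, h => by
    have ih : ∀ i j, ∑ l, hypMat n i l * hypMat n l j = (1 : Matrix _ _ _) i j := fun i j => by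
      rw [← mul_apply, hypMat_mul_self n (by simpa [Nat.even_add] using h)]
    ext i j
    rw [mul_apply, Fin.sum_univ_succ, Fin.sum_univ_succ]
    refine Fin.cases ?_ (Fin.cases ?_ fun i => ?_) i <;>
      refine Fin.cases ?_ (Fin.cases ?_ fun j => ?_) j <;>
      simp [ih, one_apply, (Fin.succ_ne_zero _).symm, Fin.succ_succ_ne_one,
        (Fin.succ_succ_ne_one _).symm]

theorem det_hypMat_ne_zero (hn : Even n) : (hypMat n).det ≠ 0 := by
  intro h
  simpa [h] using congrArg det (hypMat_mul_self n hn)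

end hypMat

theorem Matrix.dotProduct_mulVec_self_eq_zero {R ι : Type*} [CommRing R] [CharP R 2] [Fintype ι]
    [LinearOrder ι] {A : Matrix ι ι R} (hA : A.IsSymm) (hd : ∀ i, A i i = 0) (v : ι → R) :
    v ⬝ᵥ A *ᵥ v = 0 := by
  set U : Matrix ι ι R := of fun i j => if i < j then A i j else 0
  have hAU : A = U + Uᵀ := by
    ext i j
    rcases lt_trichotomy i j with h | rfl | h
    · simp [U, h, h.not_gt]
    · simp [U, hd]
    · simp [U, h, h.not_gt, hA.apply]
  rw [hAU, add_mulVec, dotProduct_add, mulVec_transpose, dotProduct_comm v (v ᵥ* U),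
    ← dotProduct_mulVec, CharTwo.add_self_eq_zero]

namespace LinearMap.BilinForm

section Gram

variable {R M ι : Type*} [CommRing R] [AddCommGroup M] [Module R M] [Fintype ι]
  {B : BilinForm R M} {u : ι → M} {G : Matrix ι ι R}

theorem mem_orthogonal_span_range_iff {w : M} :
    w ∈ B.orthogonal (span R (Set.range u)) ↔ ∀ i, B (u i) w = 0 := by
  refine ⟨fun h i => h _ (subset_span ⟨i, rfl⟩), fun h x hx => ?_⟩
  obtain ⟨c, rfl⟩ := (mem_span_range_iff_exists_fun R).1 hx
  simp [h]

theorem apply_sum_smul_eq_vecMul (hu : ∀ i j, B (u i) (u j) = G i j) (c : ι → R) (j : ι) :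
    B (∑ i, c i • u i) (u j) = (c ᵥ* G) j := by
  simp [vecMul, dotProduct, hu]

variable [DecidableEq ι] [IsDomain R]

theorem eq_zero_of_apply_sum_smul_eq_zero (hG : G.det ≠ 0) (hu : ∀ i j, B (u i) (u j) = G i j)
    {c : ι → R} (hc : ∀ j, B (∑ i, c i • u i) (u j) = 0) : c = 0 :=
  eq_zero_of_vecMul_eq_zero hG <| funext fun j => by rw [← apply_sum_smul_eq_vecMul hu, hc]; rfl

theorem linearIndependent_of_det_ne_zero (hG : G.det ≠ 0) (hu : ∀ i j, B (u i) (u j) = G i j) :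
    LinearIndependent R u :=
  Fintype.linearIndependent_iff.2 fun c hc =>
    congrFun (eq_zero_of_apply_sum_smul_eq_zero hG hu fun j => by simp [hc])

theorem disjoint_span_orthogonal_of_det_ne_zero (hB : B.IsRefl) (hG : G.det ≠ 0)
    (hu : ∀ i j, B (u i) (u j) = G i j) :
    Disjoint (span R (Set.range u)) (B.orthogonal (span R (Set.range u))) := by
  refine disjoint_def.2 fun x hx hxo => ?_
  obtain ⟨c, rfl⟩ := (mem_span_range_iff_exists_fun R).1 hx
  have hc := eq_zero_of_apply_sum_smul_eq_zero hG hu fun j =>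
    hB _ _ (mem_orthogonal_span_range_iff.1 hxo j)
  simp [hc]

end Gram

section Field

variable {K V ι : Type*} [Field K] [AddCommGroup V] [Module K V] [FiniteDimensional K V]
  [Fintype ι] [DecidableEq ι] {B : BilinForm K V} {u : ι → V} {G : Matrix ι ι K}

theorem finrank_orthogonal_span_add_card (hB : B.Nondegenerate) (hG : G.det ≠ 0)
    (hu : ∀ i j, B (u i) (u j) = G i j) :
    finrank K (B.orthogonal (span K (Set.range u))) + Fintype.card ι = finrank K V := by
  rw [finrank_orthogonal hB, ← finrank_span_eq_card (linearIndependent_of_det_ne_zero hG hu)]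
  have := (span K (Set.range u)).finrank_le
  omega

theorem nondegenerate_restrict_orthogonal_span (hB : B.Nondegenerate) (hBr : B.IsRefl)
    (hG : G.det ≠ 0) (hu : ∀ i j, B (u i) (u j) = G i j) :
    (B.restrict (B.orthogonal (span K (Set.range u)))).Nondegenerate := by
  rw [restrict_nondegenerate_iff_isCompl_orthogonal hBr, orthogonal_orthogonal hB hBr]
  exact ((isCompl_orthogonal_iff_disjoint hBr).2
    (disjoint_span_orthogonal_of_det_ne_zero hBr hG hu)).symm

end Field

section ZModTwo

variable {V : Type*} [AddCommGroup V] [Module (ZMod 2) V] {B : BilinForm (ZMod 2) V}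

theorem apply_vecCons_eq_one {x : V} (hx : B x x = 1) (i j : Fin 1) :
    B (![x] i) (![x] j) = (1 : Matrix (Fin 1) (Fin 1) (ZMod 2)) i j := by
  fin_cases i; fin_cases j; simpa

theorem exists_apply_eq_one (hB : B.Nondegenerate) {e : V} (he : e ≠ 0) : ∃ f, B e f = 1 := by
  by_contra! h
  exact he (hB.1 e fun f => not_not.1 (mt (Fin.eq_one_of_ne_zero _) (h f)))

variable [FiniteDimensional (ZMod 2) V]

theorem exists_gram_eq_hypMat (hB : B.Nondegenerate) (hs : B.IsSymm) (ha : B.IsAlt) (n : ℕ)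
    (hn : finrank (ZMod 2) V = n) :
    Even n ∧ ∃ v : Fin n → V, ∀ i j, B (v i) (v j) = hypMat n i j := by
  induction n using Nat.strong_induction_on generalizing V with | _ n ih =>
  rcases Nat.eq_zero_or_pos n with rfl | hpos
  · exact ⟨⟨0, rfl⟩, Fin.elim0, fun i => i.elim0⟩
  obtain ⟨e, he⟩ := finrank_pos_iff_exists_ne_zero.1 (hn ▸ hpos)
  obtain ⟨f, hef⟩ := exists_apply_eq_one hB he
  have hfe : B f e = 1 := hs.eq e f ▸ hef
  have hu : ∀ i j, B (![e, f] i) (![e, f] j) = !![0, 1; 1, 0] i j := by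
    intro i j
    fin_cases i <;> fin_cases j <;> simp [ha.self_eq_zero, hef, hfe]
  have hG : (!![0, 1; 1, 0] : Matrix (Fin 2) (Fin 2) (ZMod 2)).det ≠ 0 := by
    simp [det_fin_two_of]
  set W := B.orthogonal (span (ZMod 2) (Set.range ![e, f]))
  have hW : finrank (ZMod 2) W + 2 = n := by
    rw [← hn, ← finrank_orthogonal_span_add_card hB hG hu, Fintype.card_fin]
  obtain ⟨m, rfl⟩ : ∃ m, n = m + 2 := ⟨_, hW.symm⟩
  obtain ⟨hm, g, hg⟩ := ih m (by omega)
    (nondegenerate_restrict_orthogonal_span hB hs.isRefl hG hu) (hs.restrict W) (fun w => ha w)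
    (Nat.add_right_cancel hW)
  have heW : ∀ w : W, B e w = 0 := fun w => mem_orthogonal_span_range_iff.1 w.2 0
  have hfW : ∀ w : W, B f w = 0 := fun w => mem_orthogonal_span_range_iff.1 w.2 1
  have hWe : ∀ w : W, B w e = 0 := fun w => (hs.eq _ _).trans (heW w)
  have hWf : ∀ w : W, B w f = 0 := fun w => (hs.eq _ _).trans (hfW w)
  refine ⟨hm.add even_two, Fin.cons e (Fin.cons f fun i => g i), fun i j => ?_⟩
  refine Fin.cases ?_ (Fin.cases ?_ fun i => ?_) i <;>
    refine Fin.cases ?_ (Fin.cases ?_ fun j => ?_) j <;>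
    simp [ha.self_eq_zero, hef, hfe, heW, hfW, hWe, hWf, ← hg]

theorem exists_self_eq_one_and_not_isAlt_orthogonal (hB : B.Nondegenerate) (hs : B.IsSymm)
    {x : V} (hx : B x x = 1) :
    ∃ u, B u u = 1 ∧ (finrank (ZMod 2) V = 1 ∨
      ¬ (B.restrict (B.orthogonal (span (ZMod 2) (Set.range ![u])))).IsAlt) := by
  by_cases h1 : finrank (ZMod 2) V = 1
  · exact ⟨x, hx, .inl h1⟩
  set W := B.orthogonal (span (ZMod 2) (Set.range ![x]))
  by_cases hW : (B.restrict W).IsAlt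
  swap
  · exact ⟨x, hx, .inr hW⟩
  have hG : (1 : Matrix (Fin 1) (Fin 1) (ZMod 2)).det ≠ 0 := by simp
  have hWpos : 0 < finrank (ZMod 2) W := by
    have hWV : finrank (ZMod 2) W + 1 = finrank (ZMod 2) V :=
      finrank_orthogonal_span_add_card hB hG (apply_vecCons_eq_one hx)
    have : 0 < finrank (ZMod 2) V :=
      finrank_pos_iff_exists_ne_zero.2 ⟨x, fun h => by simp [h] at hx⟩
    omega
  obtain ⟨e, he⟩ := finrank_pos_iff_exists_ne_zero.1 hWpos
  obtain ⟨f, hef⟩ := exists_apply_eq_one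
    (nondegenerate_restrict_orthogonal_span hB hs.isRefl hG (apply_vecCons_eq_one hx)) he
  have hxW : ∀ w : W, B x w = 0 := fun w => mem_orthogonal_span_range_iff.1 w.2 0
  have hWx : ∀ w : W, B w x = 0 := fun w => (hs.eq _ _).trans (hxW w)
  have hee : B e e = 0 := hW e
  have hff : B f f = 0 := hW f
  have hef' : B e f = 1 := hef
  have hfe : B f e = 1 := (hs.eq _ _).trans hef
  refine ⟨x + e + f, by simp [hx, hxW, hWx, hee, hff, hef', hfe]; decide, .inr fun h => ?_⟩
  have hmem : x + e ∈ B.orthogonal (span (ZMod 2) (Set.range ![x + e + f])) :=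
    mem_orthogonal_span_range_iff.2 fun i => by
      fin_cases i; simp [hx, hxW, hWx, hee, hfe]; decide
  simpa [hx, hxW, hWx, hee] using h ⟨x + e, hmem⟩

theorem exists_gram_eq_one (hB : B.Nondegenerate) (hs : B.IsSymm) (ha : ¬ B.IsAlt) (n : ℕ)
    (hn : finrank (ZMod 2) V = n) :
    ∃ v : Fin n → V, ∀ i j, B (v i) (v j) = (1 : Matrix (Fin n) (Fin n) (ZMod 2)) i j := by
  induction n using Nat.strong_induction_on generalizing V with | _ n ih =>
  obtain ⟨x, hx⟩ : ∃ x, B x x = 1 := by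
    by_contra! h
    exact ha fun x => not_not.1 (mt (Fin.eq_one_of_ne_zero _) (h x))
  obtain ⟨u, hu, hW⟩ := exists_self_eq_one_and_not_isAlt_orthogonal hB hs hx
  have hG : (1 : Matrix (Fin 1) (Fin 1) (ZMod 2)).det ≠ 0 := by simp
  set W := B.orthogonal (span (ZMod 2) (Set.range ![u]))
  have hWn : finrank (ZMod 2) W + 1 = n :=
    hn ▸ finrank_orthogonal_span_add_card hB hG (apply_vecCons_eq_one hu)
  obtain ⟨m, rfl⟩ : ∃ m, n = m + 1 := ⟨_, hWn.symm⟩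
  obtain ⟨g, hg⟩ : ∃ g : Fin m → W, ∀ i j, B (g i) (g j) = (1 : Matrix _ _ _) i j := by
    rcases hW with h1 | hW
    · obtain rfl : m = 0 := by omega
      exact ⟨Fin.elim0, fun i => i.elim0⟩
    · exact ih m (by omega) (nondegenerate_restrict_orthogonal_span hB hs.isRefl hG
        (apply_vecCons_eq_one hu)) (hs.restrict W) hW (Nat.add_right_cancel hWn)
  have huW : ∀ w : W, B u w = 0 := fun w => mem_orthogonal_span_range_iff.1 w.2 0
  have hWu : ∀ w : W, B w u = 0 := fun w => (hs.eq _ _).trans (huW w)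
  refine ⟨Fin.cons u fun i => g i, fun i j => ?_⟩
  refine Fin.cases ?_ (fun i => ?_) i <;> refine Fin.cases ?_ (fun j => ?_) j <;>
    simp [hu, huW, hWu, hg, one_apply, (Fin.succ_ne_zero _).symm]

end ZModTwo

end LinearMap.BilinForm

theorem Matrix.exists_isUnit_transpose_mul_mul_eq {K ι : Type*} [Field K] [Fintype ι]
    [DecidableEq ι] {Λ G : Matrix ι ι K} (hG : G.det ≠ 0) (v : ι → ι → K)
    (hv : ∀ i j, toBilin' Λ (v i) (v j) = G i j) :
    ∃ M : Matrix ι ι K, IsUnit M ∧ Mᵀ * Λ * M = G :=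
  ⟨(of v)ᵀ, (isUnit_transpose _).2 (linearIndependent_rows_iff_isUnit.1
      (LinearMap.BilinForm.linearIndependent_of_det_ne_zero hG hv)),
    by ext i j; rw [transpose_transpose, mul_mul_apply, ← hv, toBilin'_apply']; rfl⟩

/-- Every non-degenerate symmetric bilinear form over `F_2` is
congruent to `I_n` or (for even `n`) to `λ_n = hypMat n`; moreover `I_n` admits
a vector with `v·v = 1` (for `n > 0`) while for `λ_n` every vector satisfies
`v·v = 0`, so the two are not congruent. -/
theorem stmt2 (n : ℕ) (Λ : Matrix (Fin n) (Fin n) (ZMod 2))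
    (hsym : Λ.IsSymm) (hnd : IsUnit Λ) :
    ((∃ M : Matrix (Fin n) (Fin n) (ZMod 2), IsUnit M ∧ Mᵀ * Λ * M = 1) ∨
      (n % 2 = 0 ∧
        ∃ M : Matrix (Fin n) (Fin n) (ZMod 2), IsUnit M ∧ Mᵀ * Λ * M = hypMat n)) ∧
    (0 < n → ∃ v : Fin n → ZMod 2, v ⬝ᵥ ((1 : Matrix (Fin n) (Fin n) (ZMod 2)) *ᵥ v) = 1) ∧
    (n % 2 = 0 → ∀ v : Fin n → ZMod 2, v ⬝ᵥ (hypMat n *ᵥ v) = 0) := by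
  have hB : (toBilin' Λ).Nondegenerate := nondegenerate_toBilin'_iff.2
    (nondegenerate_of_det_ne_zero ((isUnit_iff_isUnit_det _).1 hnd).ne_zero)
  have hs : (toBilin' Λ).IsSymm := isSymm_toBilin'_iff_isSymm.2 hsym
  refine ⟨?_, fun hn => ⟨Pi.single ⟨0, hn⟩ 1, by simp⟩,
    fun _ => dotProduct_mulVec_self_eq_zero (hypMat_isSymm n) hypMat_apply_self⟩
  by_cases ha : (toBilin' Λ).IsAlt
  · obtain ⟨heven, v, hv⟩ :=
      LinearMap.BilinForm.exists_gram_eq_hypMat hB hs ha n (finrank_fin_fun _)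
    exact .inr ⟨Nat.even_iff.1 heven,
      exists_isUnit_transpose_mul_mul_eq (det_hypMat_ne_zero heven) v hv⟩
  · obtain ⟨v, hv⟩ := LinearMap.BilinForm.exists_gram_eq_one hB hs ha n (finrank_fin_fun _)
    exact .inl (exists_isUnit_transpose_mul_mul_eq (by simp) v hv)
end

section
/- Let M be a c-by-n random matrix over F_2 whose first row is the all-ones vector and whose j-th row (for j ≥ 2) is chosen uniformly at random subject to having zero dot product with each of the first j−1 rows. Then for any fixed vector v in F_2^n with v ≠ 0 and v ≠ all-ones, the probability that Mv = 0 is at most 2^{−c+1} + 2^{−n+c+1}. -/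
/-!
Write `W` for the span of the rows drawn so far and split the event `v ⊥ rows` according to
whether `v ∈ W`. Since `W^⊥⊥ = W`, a vector `v ∉ W` is not orthogonal to all of `W^⊥`, so a
uniform new row from `W^⊥` is orthogonal to `v` with probability at most `1/2`: after `j + 1`
rows, `v ⊥ rows` and `v ∉ W` has probability at most `2^{-j}`. The vector `v` can enter the
span only if the new row lies in the coset `v + W`, which after `k` rows has `|W| ≤ 2^k`
elements out of `|W^⊥| = 2^n / |W|`; summing these chances, weighted by the previous bound,
over the rounds gives `P(v ⊥ rows, v ∈ W) ≤ 2^{j+2-n}`.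
-/

open scoped ENNReal

/-- The standard dot product on `F_2^n`. -/
def f2dot {n : ℕ} (v w : Fin n → ZMod 2) : ZMod 2 := ∑ i, v i * w i

/-- Given a list of previously chosen rows, the next row is uniform among
vectors orthogonal to all of them (this set is nonempty since it contains `0`). -/
noncomputable def rowStep {n : ℕ} (ws : List (Fin n → ZMod 2)) :
    PMF (Fin n → ZMod 2) :=
  PMF.uniformOfFinset
    (Finset.univ.filter (fun w => ∀ v ∈ ws, f2dot w v = 0))
    ⟨0, Finset.mem_filter.mpr ⟨Finset.mem_univ _, fun v _ => by simp [f2dot]⟩⟩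

/-- The random ensemble of self-orthogonal matrices, presented as the list of
rows: the first row is the all-ones vector, and each subsequent row is chosen
uniformly subject to being orthogonal to all previous rows.  `rowEnsemble n j`
produces `j + 1` rows. -/
noncomputable def rowEnsemble (n : ℕ) : ℕ → PMF (List (Fin n → ZMod 2))
  | 0 => PMF.pure [fun _ => 1]
  | j + 1 => (rowEnsemble n j).bind
      (fun ws => (rowStep ws).map (fun w => ws ++ [w]))

open Module
open LinearMap (BilinForm)

theorem ENNReal.two_pow_mul_inv_two_pow (k : ℕ) : (2 : ℝ≥0∞) ^ k * 2⁻¹ ^ k = 1 := by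
  rw [← mul_pow, ENNReal.mul_inv_cancel two_ne_zero ENNReal.ofNat_ne_top, one_pow]

namespace PMF

variable {α β : Type*}

theorem toOuterMeasure_apply_le_one (p : PMF α) (s : Set α) : p.toOuterMeasure s ≤ 1 :=
  (p.toOuterMeasure.mono (Set.subset_univ s)).trans
    ((p.toOuterMeasure_apply_eq_one_iff _).mpr (Set.subset_univ _)).le

theorem toOuterMeasure_bind_le_of_le_indicator_add {p : PMF α} {f : α → PMF β} {s : Set β}
    {t₁ t₂ : Set α} {r₁ r₂ : ℝ≥0∞}
    (h : ∀ a ∈ p.support,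
      (f a).toOuterMeasure s ≤ t₁.indicator (fun _ => r₁) a + t₂.indicator (fun _ => r₂) a) :
    (p.bind f).toOuterMeasure s ≤ r₁ * p.toOuterMeasure t₁ + r₂ * p.toOuterMeasure t₂ := by
  rw [toOuterMeasure_bind_apply, toOuterMeasure_apply, toOuterMeasure_apply,
    ← ENNReal.tsum_mul_left, ← ENNReal.tsum_mul_left, ← ENNReal.tsum_add]
  refine ENNReal.tsum_le_tsum fun a => ?_
  by_cases ha : p a = 0
  · simp [ha]
  calc p a * (f a).toOuterMeasure s
      ≤ p a * (t₁.indicator (fun _ => r₁) a + t₂.indicator (fun _ => r₂) a) :=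
        mul_le_mul_right (h a ((mem_support_iff p a).mpr ha)) _
    _ = r₁ * t₁.indicator p a + r₂ * t₂.indicator p a := by
        by_cases h₁ : a ∈ t₁ <;> by_cases h₂ : a ∈ t₂ <;> simp [h₁, h₂, mul_comm, add_mul]

theorem toOuterMeasure_bind_le_of_le_indicator {p : PMF α} {f : α → PMF β} {s : Set β}
    {t : Set α} {r : ℝ≥0∞}
    (h : ∀ a ∈ p.support, (f a).toOuterMeasure s ≤ t.indicator (fun _ => r) a) :
    (p.bind f).toOuterMeasure s ≤ r * p.toOuterMeasure t := by
  simpa using toOuterMeasure_bind_le_of_le_indicator_add (t₂ := ∅) (r₂ := 0) (by simpa using h)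

end PMF

theorem Submodule.natCard_mul_le_natCard_of_lt {K V : Type*} [Field K] [Finite K]
    [AddCommGroup V] [Module K V] [FiniteDimensional K V] {U U' : Submodule K V} (h : U' < U) :
    Nat.card U' * Nat.card K ≤ Nat.card U := by
  rw [natCard_eq_pow_finrank (V := U') (K := K), natCard_eq_pow_finrank (V := U) (K := K),
    ← pow_succ]
  exact Nat.pow_le_pow_right Nat.card_pos (finrank_lt_finrank_of_lt h)

theorem sub_mem_span_of_mem_span_insert {V : Type*} [AddCommGroup V] [Module (ZMod 2) V]
    {s : Set V} {v w : V} (hv : v ∈ Submodule.span (ZMod 2) (insert w s))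
    (hv' : v ∉ Submodule.span (ZMod 2) s) : w - v ∈ Submodule.span (ZMod 2) s := by
  obtain ⟨a, z, hz, rfl⟩ := Submodule.mem_span_insert.mp hv
  rcases (by decide : ∀ b : ZMod 2, b = 0 ∨ b = 1) a with rfl | rfl
  · exact absurd (by simpa using hz) hv'
  · simpa only [one_smul, sub_add_cancel_left] using neg_mem hz

namespace LinearMap.BilinForm

theorem mem_orthogonal_span_iff {R M : Type*} [CommSemiring R] [AddCommMonoid M] [Module R M]
    {B : BilinForm R M} {s : Set M} {w : M} :
    w ∈ B.orthogonal (Submodule.span R s) ↔ ∀ u ∈ s, B u w = 0 := by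
  refine ⟨fun h u hu => h u (Submodule.subset_span hu), fun h => ?_⟩
  have : Submodule.span R s ≤ LinearMap.ker (B.flip w) := Submodule.span_le.mpr h
  exact fun u hu => this hu

variable {K V : Type*} [Field K] [AddCommGroup V] [Module K V] [FiniteDimensional K V]
  {B : BilinForm K V}

theorem natCard_orthogonal_mul_natCard [Finite K] (hB : B.Nondegenerate) (W : Submodule K V) :
    Nat.card (B.orthogonal W) * Nat.card W = Nat.card V := by
  rw [natCard_eq_pow_finrank (V := B.orthogonal W) (K := K),
    natCard_eq_pow_finrank (V := W) (K := K), natCard_eq_pow_finrank (V := V) (K := K),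
    ← pow_add, finrank_orthogonal hB, Nat.sub_add_cancel W.finrank_le]

theorem exists_mem_orthogonal_ne_zero (hB : B.Nondegenerate) (hB₀ : B.IsRefl)
    {W : Submodule K V} {v : V} (hv : v ∉ W) : ∃ w ∈ B.orthogonal W, B w v ≠ 0 := by
  rw [← orthogonal_orthogonal hB hB₀ W] at hv
  simpa [mem_orthogonal_iff] using hv

end LinearMap.BilinForm

section DotProduct

variable {K ι : Type*} [Field K] [Fintype ι]

theorem dotProductBilin_isRefl : BilinForm.IsRefl (dotProductBilin K K : BilinForm K (ι → K)) :=
  fun v w h => by simpa [dotProduct_comm] using h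

theorem dotProductBilin_nondegenerate :
    (dotProductBilin K K : BilinForm K (ι → K)).Nondegenerate := by
  classical
  refine ⟨fun v hv => ?_, fun v hv => ?_⟩ <;> ext i <;> simpa using hv (Pi.single i 1)

end DotProduct

section SelfOrthogonalEnsemble

variable {n : ℕ}

def rowSpan (ws : List (Fin n → ZMod 2)) : Submodule (ZMod 2) (Fin n → ZMod 2) :=
  Submodule.span (ZMod 2) {u | u ∈ ws}

def rowOrthogonal (ws : List (Fin n → ZMod 2)) : Submodule (ZMod 2) (Fin n → ZMod 2) :=
  BilinForm.orthogonal (dotProductBilin (ZMod 2) (ZMod 2)) (rowSpan ws)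

theorem mem_rowOrthogonal {ws : List (Fin n → ZMod 2)} {w : Fin n → ZMod 2} :
    w ∈ rowOrthogonal ws ↔ ∀ u ∈ ws, f2dot w u = 0 := by
  rw [rowOrthogonal, rowSpan, BilinForm.mem_orthogonal_span_iff]
  simp [f2dot, dotProduct, mul_comm]

theorem natCard_rowSpan_le (ws : List (Fin n → ZMod 2)) :
    Nat.card (rowSpan ws) ≤ 2 ^ ws.length := by
  classical
  rw [natCard_eq_pow_finrank (K := ZMod 2), Nat.card_zmod, rowSpan,
    show {u | u ∈ ws} = (ws.toFinset : Set (Fin n → ZMod 2)) by simp]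
  exact Nat.pow_le_pow_right two_pos
    ((finrank_span_finset_le_card _).trans ws.toFinset_card_le)

theorem rowStep_toOuterMeasure_apply (ws : List (Fin n → ZMod 2)) (t : Set (Fin n → ZMod 2)) :
    (rowStep ws).toOuterMeasure t =
      Nat.card ↥((rowOrthogonal ws : Set (Fin n → ZMod 2)) ∩ t) / Nat.card (rowOrthogonal ws) := by
  classical
  refine (PMF.toOuterMeasure_uniformOfFinset_apply _ t).trans ?_
  rw [← SetLike.coe_sort_coe, Nat.card_eq_card_toFinset, Nat.card_eq_card_toFinset]
  congr 3 <;> ext w <;> simp [mem_rowOrthogonal]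

theorem rowStep_dotProduct_eq_zero_le {ws : List (Fin n → ZMod 2)} {v : Fin n → ZMod 2}
    (hv : v ∉ rowSpan ws) : (rowStep ws).toOuterMeasure {w | f2dot w v = 0} ≤ 2⁻¹ := by
  have hinter : (rowOrthogonal ws : Set (Fin n → ZMod 2)) ∩ {w | f2dot w v = 0} =
      rowOrthogonal (v :: ws) := by
    ext w; simp [mem_rowOrthogonal, and_comm]
  have hlt : rowOrthogonal (v :: ws) < rowOrthogonal ws := by
    obtain ⟨w, hw, hwv⟩ := BilinForm.exists_mem_orthogonal_ne_zero
      dotProductBilin_nondegenerate dotProductBilin_isRefl hv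
    refine SetLike.lt_iff_le_and_exists.mpr ⟨fun x hx => ?_, w, hw, fun hw' => hwv ?_⟩
    · exact mem_rowOrthogonal.mpr fun u hu =>
        mem_rowOrthogonal.mp hx u (List.mem_cons_of_mem v hu)
    · exact mem_rowOrthogonal.mp hw' v List.mem_cons_self
  have hcard := Submodule.natCard_mul_le_natCard_of_lt hlt
  rw [Nat.card_zmod] at hcard
  rw [rowStep_toOuterMeasure_apply, hinter, SetLike.coe_sort_coe]
  refine ENNReal.div_le_of_le_mul
    ((ENNReal.mul_le_iff_le_inv two_ne_zero ENNReal.ofNat_ne_top).mp ?_)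
  rw [mul_comm]
  exact_mod_cast hcard

theorem rowStep_sub_mem_le (ws : List (Fin n → ZMod 2)) (v : Fin n → ZMod 2) :
    (rowStep ws).toOuterMeasure {w | w - v ∈ rowSpan ws} ≤
      Nat.card (rowSpan ws) * Nat.card (rowSpan ws) * 2⁻¹ ^ n := by
  have hcoset : Nat.card ↥((rowOrthogonal ws : Set (Fin n → ZMod 2)) ∩ {w | w - v ∈ rowSpan ws})
      ≤ Nat.card (rowSpan ws) :=
    (Nat.card_mono (Set.toFinite _) Set.inter_subset_right).trans
      (Nat.card_congr ((Equiv.subRight v).subtypeEquiv (q := (· ∈ rowSpan ws))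
        fun _ => Iff.rfl)).le
  have hprod : (Nat.card (rowOrthogonal ws) * Nat.card (rowSpan ws) : ℝ≥0∞) = 2 ^ n := by
    rw [← Nat.cast_mul, rowOrthogonal,
      BilinForm.natCard_orthogonal_mul_natCard dotProductBilin_nondegenerate]
    simp
  rw [rowStep_toOuterMeasure_apply]
  refine ENNReal.div_le_of_le_mul ?_
  calc (Nat.card ↥((rowOrthogonal ws : Set (Fin n → ZMod 2)) ∩ {w | w - v ∈ rowSpan ws}) : ℝ≥0∞)
      ≤ Nat.card (rowSpan ws) := by exact_mod_cast hcoset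
    _ = Nat.card (rowSpan ws) * (2 ^ n * 2⁻¹ ^ n) := by
      rw [ENNReal.two_pow_mul_inv_two_pow, mul_one]
    _ = Nat.card (rowSpan ws) * Nat.card (rowSpan ws) * 2⁻¹ ^ n * Nat.card (rowOrthogonal ws) := by
      rw [← hprod]; ring

def orthEvent (v : Fin n → ZMod 2) : Set (List (Fin n → ZMod 2)) :=
  {L | ∀ w ∈ L, f2dot w v = 0}

def spanEvent (v : Fin n → ZMod 2) : Set (List (Fin n → ZMod 2)) :=
  {L | v ∈ rowSpan L}

section AppendRow

variable {ws : List (Fin n → ZMod 2)} {v w : Fin n → ZMod 2}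

theorem append_mem_orthEvent_iff :
    ws ++ [w] ∈ orthEvent v ↔ ws ∈ orthEvent v ∧ f2dot w v = 0 := by
  simp [orthEvent, or_imp, forall_and]

theorem rowSpan_append_singleton :
    rowSpan (ws ++ [w]) = Submodule.span (ZMod 2) (insert w {u | u ∈ ws}) := by
  rw [rowSpan]
  congr 1
  ext u
  simp [or_comm]

theorem rowSpan_le_append : rowSpan ws ≤ rowSpan (ws ++ [w]) :=
  Submodule.span_mono fun _ hu => List.mem_append_left _ hu

end AppendRow

noncomputable def appendRow (ws : List (Fin n → ZMod 2)) : PMF (List (Fin n → ZMod 2)) :=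
  (rowStep ws).map (fun w => ws ++ [w])

theorem rowEnsemble_succ (j : ℕ) : rowEnsemble n (j + 1) = (rowEnsemble n j).bind appendRow :=
  rfl

theorem appendRow_orthEvent_diff_spanEvent_le (ws : List (Fin n → ZMod 2))
    (v : Fin n → ZMod 2) :
    (appendRow ws).toOuterMeasure (orthEvent v \ spanEvent v) ≤
      (orthEvent v \ spanEvent v).indicator (fun _ => 2⁻¹) ws := by
  rw [appendRow, PMF.toOuterMeasure_map_apply]
  by_cases hws : ws ∈ orthEvent v \ spanEvent v
  · rw [Set.indicator_of_mem hws]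
    refine ((rowStep ws).toOuterMeasure.mono fun w hw => ?_).trans
      (rowStep_dotProduct_eq_zero_le hws.2)
    exact (append_mem_orthEvent_iff.mp hw.1).2
  · have hempty : (fun w => ws ++ [w]) ⁻¹' (orthEvent v \ spanEvent v) = ∅ :=
      Set.eq_empty_of_forall_notMem fun w hw =>
        hws ⟨(append_mem_orthEvent_iff.mp hw.1).1, fun h => hw.2 (rowSpan_le_append h)⟩
    simp [hempty]

theorem appendRow_orthEvent_inter_spanEvent_le (ws : List (Fin n → ZMod 2))
    (v : Fin n → ZMod 2) :
    (appendRow ws).toOuterMeasure (orthEvent v ∩ spanEvent v) ≤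
      (orthEvent v ∩ spanEvent v).indicator (fun _ => 1) ws +
        (orthEvent v \ spanEvent v).indicator
          (fun _ => 2 ^ ws.length * 2 ^ ws.length * 2⁻¹ ^ n) ws := by
  rw [appendRow, PMF.toOuterMeasure_map_apply]
  by_cases hin : ws ∈ orthEvent v ∩ spanEvent v
  · rw [Set.indicator_of_mem hin]
    exact le_add_right (PMF.toOuterMeasure_apply_le_one _ _)
  by_cases hout : ws ∈ orthEvent v \ spanEvent v
  · rw [Set.indicator_of_notMem hin, Set.indicator_of_mem hout, zero_add]
    have hcard : (Nat.card (rowSpan ws) : ℝ≥0∞) ≤ 2 ^ ws.length := by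
      exact_mod_cast natCard_rowSpan_le ws
    refine ((rowStep ws).toOuterMeasure.mono fun w hw => ?_).trans
      ((rowStep_sub_mem_le ws v).trans (by gcongr))
    have hspan : v ∈ rowSpan (ws ++ [w]) := hw.2
    rw [rowSpan_append_singleton] at hspan
    exact sub_mem_span_of_mem_span_insert hspan hout.2
  · have hempty : (fun w => ws ++ [w]) ⁻¹' (orthEvent v ∩ spanEvent v) = ∅ :=
      Set.eq_empty_of_forall_notMem fun w hw => by
        have horth := (append_mem_orthEvent_iff.mp hw.1).1
        by_cases hspan : ws ∈ spanEvent v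
        exacts [hin ⟨horth, hspan⟩, hout ⟨horth, hspan⟩]
    simp [hempty]

theorem length_of_mem_support_rowEnsemble {j : ℕ} {L : List (Fin n → ZMod 2)}
    (hL : L ∈ (rowEnsemble n j).support) : L.length = j + 1 := by
  induction j generalizing L with
  | zero =>
    rw [rowEnsemble, PMF.support_pure, Set.mem_singleton_iff] at hL
    simp [hL]
  | succ j ih =>
    rw [rowEnsemble_succ, PMF.mem_support_bind_iff] at hL
    obtain ⟨ws, hws, hL⟩ := hL
    obtain ⟨w, -, rfl⟩ := (PMF.mem_support_map_iff _ _ _).mp hL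
    simp [ih hws]

theorem rowEnsemble_orthEvent_diff_spanEvent_le (v : Fin n → ZMod 2) :
    ∀ j, (rowEnsemble n j).toOuterMeasure (orthEvent v \ spanEvent v) ≤ 2⁻¹ ^ j
  | 0 => by simpa using PMF.toOuterMeasure_apply_le_one _ _
  | j + 1 =>
    calc (rowEnsemble n (j + 1)).toOuterMeasure (orthEvent v \ spanEvent v)
        ≤ 2⁻¹ * (rowEnsemble n j).toOuterMeasure (orthEvent v \ spanEvent v) := by
          rw [rowEnsemble_succ]
          exact PMF.toOuterMeasure_bind_le_of_le_indicator fun ws _ =>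
            appendRow_orthEvent_diff_spanEvent_le ws v
      _ ≤ 2⁻¹ * 2⁻¹ ^ j := by gcongr; exact rowEnsemble_orthEvent_diff_spanEvent_le v j
      _ = 2⁻¹ ^ (j + 1) := (pow_succ' _ _).symm

theorem rowEnsemble_orthEvent_inter_spanEvent_le {v : Fin n → ZMod 2} (hv0 : v ≠ 0)
    (hv1 : v ≠ fun _ => 1) :
    ∀ j, (rowEnsemble n j).toOuterMeasure (orthEvent v ∩ spanEvent v) ≤ 2 ^ (j + 2) * 2⁻¹ ^ n
  | 0 => by
    have hv : v ∉ rowSpan [fun _ => 1] := by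
      simp only [rowSpan, List.mem_singleton, Set.ofPred_eq_eq_singleton,
        Submodule.mem_span_singleton]
      rintro ⟨a, rfl⟩
      rcases (by decide : ∀ b : ZMod 2, b = 0 ∨ b = 1) a with rfl | rfl
      exacts [hv0 (zero_smul _ _), hv1 (one_smul _ _)]
    rw [rowEnsemble, PMF.toOuterMeasure_pure_apply, if_neg fun h => hv h.2]
    exact zero_le
  | j + 1 => by
    have hstep : (rowEnsemble n (j + 1)).toOuterMeasure (orthEvent v ∩ spanEvent v) ≤
        1 * (rowEnsemble n j).toOuterMeasure (orthEvent v ∩ spanEvent v) +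
          2 ^ (j + 1) * 2 ^ (j + 1) * 2⁻¹ ^ n *
            (rowEnsemble n j).toOuterMeasure (orthEvent v \ spanEvent v) := by
      rw [rowEnsemble_succ]
      exact PMF.toOuterMeasure_bind_le_of_le_indicator_add fun ws hws =>
        length_of_mem_support_rowEnsemble hws ▸ appendRow_orthEvent_inter_spanEvent_le ws v
    refine hstep.trans ?_
    calc _ ≤ 1 * ((2 : ℝ≥0∞) ^ (j + 2) * 2⁻¹ ^ n) +
          2 ^ (j + 1) * 2 ^ (j + 1) * 2⁻¹ ^ n * 2⁻¹ ^ j := by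
          gcongr
          exacts [rowEnsemble_orthEvent_inter_spanEvent_le hv0 hv1 j,
            rowEnsemble_orthEvent_diff_spanEvent_le v j]
      _ = 2 ^ (j + 2) * 2⁻¹ ^ n + 2 ^ (j + 2) * 2⁻¹ ^ n * (2 ^ j * 2⁻¹ ^ j) := by ring
      _ = 2 ^ (j + 3) * 2⁻¹ ^ n := by rw [ENNReal.two_pow_mul_inv_two_pow]; ring

theorem rowEnsemble_orthEvent_le {v : Fin n → ZMod 2} (hv0 : v ≠ 0) (hv1 : v ≠ fun _ => 1)
    (j : ℕ) :
    (rowEnsemble n j).toOuterMeasure (orthEvent v) ≤ 2⁻¹ ^ j + 2 ^ (j + 2) * 2⁻¹ ^ n :=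
  calc (rowEnsemble n j).toOuterMeasure (orthEvent v)
      = (rowEnsemble n j).toOuterMeasure
          (orthEvent v \ spanEvent v ∪ orthEvent v ∩ spanEvent v) := by
        rw [Set.sdiff_union_inter]
    _ ≤ _ := MeasureTheory.measure_union_le _ _
    _ ≤ _ := add_le_add (rowEnsemble_orthEvent_diff_spanEvent_le v j)
        (rowEnsemble_orthEvent_inter_spanEvent_le hv0 hv1 j)

end SelfOrthogonalEnsemble

theorem stmt4_general (n c : ℕ) (v : Fin n → ZMod 2)
    (hv0 : v ≠ 0) (hv1 : v ≠ fun _ => 1) :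
    (rowEnsemble n (c - 1)).toOuterMeasure
        {L | ∀ w ∈ L, f2dot w v = 0}
      ≤ 2 * (2 : ℝ≥0∞)⁻¹ ^ c + 2 * (2 : ℝ≥0∞)⁻¹ ^ (n - c) := by
  by_cases hc : 1 ≤ c ∧ c ≤ n
  · obtain ⟨j, rfl⟩ : ∃ j, c = j + 1 := ⟨c - 1, by omega⟩
    obtain ⟨m, rfl⟩ : ∃ m, n = j + 1 + m := ⟨n - (j + 1), by omega⟩
    rw [Nat.add_sub_cancel, Nat.add_sub_cancel_left]
    calc _ ≤ 2⁻¹ ^ j + 2 ^ (j + 2) * 2⁻¹ ^ (j + 1 + m) := rowEnsemble_orthEvent_le hv0 hv1 j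
      _ = 2⁻¹ ^ j + 2 * 2⁻¹ ^ m * (2 ^ (j + 1) * 2⁻¹ ^ (j + 1)) := by ring
      _ = 2⁻¹ ^ j * (2 ^ 1 * 2⁻¹ ^ 1) + 2 * 2⁻¹ ^ m := by
          rw [ENNReal.two_pow_mul_inv_two_pow, ENNReal.two_pow_mul_inv_two_pow]; ring
      _ = 2 * 2⁻¹ ^ (j + 1) + 2 * 2⁻¹ ^ m := by ring
  · refine (PMF.toOuterMeasure_apply_le_one _ _).trans ?_
    rcases (by omega : c = 0 ∨ n - c = 0) with h | h
    · exact le_add_right (by rw [h]; norm_num)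
    · exact le_add_left (by rw [h]; norm_num)

/-- for a `c`-by-`n` random matrix from the self-orthogonal
ensemble (first row all-ones, `c ≥ 1`), and any fixed `v ≠ 0`, `v ≠ 1⃗`, the
probability that `M v = 0` (i.e. `v` is orthogonal to every row) is at most
`2^{-c+1} + 2^{-n+c+1}`. -/
theorem stmt4 (n c : ℕ) (hc : 1 ≤ c) (v : Fin n → ZMod 2)
    (hv0 : v ≠ 0) (hv1 : v ≠ fun _ => 1) :
    (rowEnsemble n (c - 1)).toOuterMeasure
        {L | ∀ w ∈ L, f2dot w v = 0}
      ≤ 2 * (2 : ℝ≥0∞)⁻¹ ^ c + 2 * (2 : ℝ≥0∞)⁻¹ ^ (n - c) :=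
  stmt4_general n c v hv0 hv1
end

section
/- Let G be a bipartite graph with vertex parts B (bits) and C (checks), where every vertex in B has degree s ≥ 2, every vertex in C has degree w, and G has girth greater than 2d̃. Then the parity check matrix M defined by G (rows indexed by C, columns by B, with M_{c,b} = 1 iff c is adjacent to b) is (d̃, s)-sensitive: every nonzero vector v ∈ F_2^B with |v| ≤ d̃ satisfies |Mv| ≥ s. -/
/-!
Let `V` be the support of `v` and `H` the part of the Tanner graph made of the edges at `V`.
Every edge of `H` meets `V`, so a cycle of `H` has length at most `2|V| ≤ 2d̃`, and the girth
assumption makes `H` a forest. `H` has `s|V|` edges and `|V| + N` non-isolated vertices, where `N`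
counts the checks with a neighbour in `V`; being a forest, `s|V| < |V| + N`. Each of these `N`
checks has at least two neighbours in `V` unless it is violated, so summing neighbour counts gives
`2N ≤ W + s|V|`, with `W` the number of violated checks. Hence `W ≥ (s - 2)(|V| - 1) + s ≥ s`.
-/

open Matrix

/-- The bipartite (Tanner) graph on `B ⊕ C` determined by an adjacency
relation `adj : C → B → Prop` between checks and bits. -/
def tannerGraph {B C : Type*} (adj : C → B → Prop) : SimpleGraph (B ⊕ C) where
  Adj x y :=
    match x, y with
    | Sum.inl b, Sum.inr c => adj c b
    | Sum.inr c, Sum.inl b => adj c b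
    | _, _ => False
  symm := by
    constructor
    intro x y h
    cases x <;> cases y <;> simp_all
  loopless := by
    constructor
    intro x h
    cases x <;> simp_all

open Finset SimpleGraph

namespace SimpleGraph

variable {V : Type*} {G : SimpleGraph V}

lemma Walk.Nil.snd_eq {v w : V} {p : G.Walk v w} (h : p.Nil) : p.snd = v := by
  cases h; rfl

lemma Walk.IsCycle.length_le_two_mul_card [DecidableEq V] {u : V} {c : G.Walk u u}
    (hc : c.IsCycle) {S : Finset V} (hS : G.IsVertexCover S) : c.length ≤ 2 * #S := by
  have hnodup : ∀ l : List V, l.Nodup → l.countP (· ∈ S) ≤ #S := fun l hl => by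
    rw [List.countP_eq_length_filter, ← List.toFinset_card_of_nodup (hl.filter _)]
    exact card_le_card fun x => by simp
  calc c.length = c.darts.length := c.length_darts.symm
    _ ≤ c.darts.countP (·.fst ∈ S) + c.darts.countP (·.snd ∈ S) := by
      rw [List.length_eq_countP_add_countP (·.fst ∈ S)]
      refine Nat.add_le_add_left (List.countP_mono_left fun d _ hd => ?_) _
      simpa using (hS d.adj).resolve_left (by simpa using hd)
    _ ≤ #S + #S := by
      refine add_le_add ?_ ?_
      · simpa [List.countP_map, Function.comp_def, ← c.map_fst_darts] using
          hnodup _ hc.nodup_dropLast_support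
      · simpa [List.countP_map, Function.comp_def, ← c.map_snd_darts] using
          hnodup _ hc.support_nodup
    _ = 2 * #S := (two_mul _).symm

lemma IsVertexCover.isAcyclic_of_lt_girth [DecidableEq V] {G' : SimpleGraph V} (hle : G ≤ G')
    {S : Finset V} (hS : G.IsVertexCover S) (hgirth : 2 * #S < G'.girth) : G.IsAcyclic := by
  by_contra hcyc
  obtain ⟨_, c, hc, hlen⟩ := exists_girth_eq_length.2 hcyc
  have := girth_anti hle hcyc
  have := hc.length_le_two_mul_card hS
  omega

lemma IsAcyclic.eq_snd_or_eq_snd_of_adj (hG : G.IsAcyclic) {r x y : V} {p : G.Walk x r}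
    {q : G.Walk y r} (hp : p.IsPath) (hq : q.IsPath) (hxy : G.Adj x y) :
    y = p.snd ∨ x = q.snd := by
  by_cases hy : y ∈ p.support
  · exact .inl (hG.eq_snd_of_adj_start hp hxy hy)
  refine .inr (hG.eq_snd_of_adj_start hq hxy.symm ?_)
  by_contra hx
  have := hG.mem_support_of_ne_mem_support_of_adj_of_isPath hp.reverse hq.reverse hxy
  simp_all

lemma IsAcyclic.card_edgeFinset_lt [Fintype V] [DecidableEq V] [DecidableRel G.Adj]
    (hG : G.IsAcyclic) (hne : G.edgeFinset.Nonempty) :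
    #G.edgeFinset < #{x | ∃ y, G.Adj x y} := by
  set root : V → V := fun x => (G.connectedComponentMk x).out
  have hreach (x : V) : G.Reachable x (root x) :=
    ConnectedComponent.exact (Quot.out_eq _).symm
  have hroot_root (x : V) : root (root x) = root x := congrArg Quot.out (Quot.out_eq _)
  have hroot_adj {x y : V} (h : G.Adj x y) : root x = root y :=
    congrArg Quot.out (ConnectedComponent.sound h.reachable)
  choose P hP using fun x => (hreach x).exists_isPath
  -- every edge is the first edge of the path to the root from one of its endpoints
  have hsurj : Set.SurjOn (fun z => s(z, (P z).snd)) {z | ¬(P z).Nil} G.edgeSet := by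
    rintro ⟨x, y⟩ (hxy : G.Adj x y)
    have hq : ((P y).copy rfl (hroot_adj hxy).symm).IsPath := by simpa using hP y
    rcases hG.eq_snd_or_eq_snd_of_adj (hP x) hq hxy with h | h
    · exact ⟨x, fun hx => hxy.ne' (h.trans hx.snd_eq), by simp [h]⟩
    · refine ⟨y, fun hy => hxy.ne (h.trans ?_), by simp [h, Sym2.eq_swap]⟩
      simpa using hy.snd_eq
  let T : Finset V := {z | ¬(P z).Nil}
  obtain ⟨e, he⟩ := hne
  obtain ⟨z, hz : ¬(P z).Nil, -⟩ := hsurj (mem_edgeFinset.1 he)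
  have hT : T ⊂ ({x | ∃ y, G.Adj x y} : Finset V) := by
    refine ssubset_iff_of_subset (fun x hx => ?_) |>.2 ⟨root z, ?_, ?_⟩
    · simp only [T, mem_filter, mem_univ, true_and] at hx ⊢
      exact ⟨_, Walk.adj_snd hx⟩
    · simpa using ⟨_, (Walk.adj_penultimate hz).symm⟩
    · simpa [T, (hP _).nil_iff_eq] using (hroot_root z).symm
  calc #G.edgeFinset ≤ #T := card_le_card_of_surjOn _ (by simpa [T] using hsurj)
    _ < _ := card_lt_card hT

end SimpleGraph

lemma two_mul_card_filter_pos_le {ι : Type*} (s : Finset ι) (d : ι → ℕ) :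
    2 * #{i ∈ s | 0 < d i} ≤ #{i ∈ s | Odd (d i)} + ∑ i ∈ s, d i := by
  simp only [card_filter, mul_sum, ← sum_add_distrib, Nat.odd_iff]
  refine sum_le_sum fun i _ => ?_
  split_ifs <;> omega

lemma sum_zmod_two_eq_card_filter_ne_zero {ι : Type*} (s : Finset ι) (f : ι → ZMod 2) :
    ∑ i ∈ s, f i = #{i ∈ s | f i ≠ 0} := by
  rw [natCast_card_filter]
  refine sum_congr rfl fun i _ => ?_
  rcases (by decide : ∀ x : ZMod 2, x = 0 ∨ x = 1) (f i) with h | h <;> simp [h]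

section Tanner

variable {B C : Type*} {a a' : C → B → Prop}

@[simp] lemma tannerGraph_adj_inl_inr {b : B} {c : C} :
    (tannerGraph a).Adj (.inl b) (.inr c) ↔ a c b := Iff.rfl

@[simp] lemma tannerGraph_adj_inr_inl {b : B} {c : C} :
    (tannerGraph a).Adj (.inr c) (.inl b) ↔ a c b := Iff.rfl

@[simp] lemma not_tannerGraph_adj_inl_inl {b b' : B} :
    ¬(tannerGraph a).Adj (.inl b) (.inl b' : B ⊕ C) := id

@[simp] lemma not_tannerGraph_adj_inr_inr {c c' : C} :
    ¬(tannerGraph a).Adj (.inr c) (.inr c' : B ⊕ C) := id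

instance [∀ c b, Decidable (a c b)] : DecidableRel (tannerGraph a).Adj
  | .inl b, .inr c => decidable_of_iff (a c b) tannerGraph_adj_inl_inr.symm
  | .inr c, .inl b => decidable_of_iff (a c b) tannerGraph_adj_inr_inl.symm
  | .inl _, .inl _ => isFalse not_tannerGraph_adj_inl_inl
  | .inr _, .inr _ => isFalse not_tannerGraph_adj_inr_inr

lemma tannerGraph_mono (h : ∀ c b, a c b → a' c b) : tannerGraph a ≤ tannerGraph a' := by
  rintro (b | c) (b' | c') hadj <;> simp_all

lemma isVertexCover_tannerGraph {S : Finset B} (hS : ∀ c b, a c b → b ∈ S) :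
    (tannerGraph a).IsVertexCover (S.map .inl : Finset (B ⊕ C)) := by
  rintro (b | c) (b' | c') hadj
  · exact absurd hadj not_tannerGraph_adj_inl_inl
  · exact .inl (by simpa using hS _ _ hadj)
  · exact .inr (by simpa using hS _ _ hadj)
  · exact absurd hadj not_tannerGraph_adj_inr_inr

lemma isAcyclic_tannerGraph_of_lt_girth [DecidableEq B] [DecidableEq C] {adj : C → B → Prop}
    (ha : ∀ c b, a c b → adj c b) {S : Finset B} (hS : ∀ c b, a c b → b ∈ S)
    (hgirth : 2 * #S < (tannerGraph adj).girth) : (tannerGraph a).IsAcyclic :=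
  (isVertexCover_tannerGraph hS).isAcyclic_of_lt_girth (tannerGraph_mono ha) (by simpa)

variable [Fintype B] [Fintype C] [∀ c b, Decidable (a c b)]

lemma degree_tannerGraph_inl (b : B) : (tannerGraph a).degree (.inl b) = #{c | a c b} := by
  rw [← card_neighborFinset_eq_degree, neighborFinset_eq_filter, card_filter,
    Fintype.sum_sum_type, card_filter]
  simp

lemma degree_tannerGraph_inr (c : C) : (tannerGraph a).degree (.inr c) = #{b | a c b} := by
  rw [← card_neighborFinset_eq_degree, neighborFinset_eq_filter, card_filter,
    Fintype.sum_sum_type, card_filter]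
  simp

lemma card_edgeFinset_tannerGraph [DecidableEq B] [DecidableEq C] :
    #(tannerGraph a).edgeFinset = ∑ c, #{b | a c b} := by
  have hhandshake := sum_degrees_eq_twice_card_edges (tannerGraph a)
  simp only [Fintype.sum_sum_type, degree_tannerGraph_inl, degree_tannerGraph_inr] at hhandshake
  have hdouble : ∑ c, #{b | a c b} = ∑ b, #{c | a c b} :=
    sum_card_bipartiteAbove_eq_sum_card_bipartiteBelow a
  omega

lemma card_nonisolated_tannerGraph :
    #{x | ∃ y, (tannerGraph a).Adj x y} = #{b | ∃ c, a c b} + #{c | ∃ b, a c b} := by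
  rw [card_filter, Fintype.sum_sum_type, card_filter, card_filter]
  simp

lemma sum_card_lt_of_isAcyclic_tannerGraph [DecidableEq B] [DecidableEq C]
    (hacyc : (tannerGraph a).IsAcyclic) (hne : ∃ c b, a c b) :
    ∑ c, #{b | a c b} < #{b | ∃ c, a c b} + #{c | ∃ b, a c b} := by
  obtain ⟨c, b, hcb⟩ := hne
  rw [← card_edgeFinset_tannerGraph, ← card_nonisolated_tannerGraph]
  exact hacyc.card_edgeFinset_lt ⟨s(.inl b, .inr c), by simpa using hcb⟩

end Tanner

lemma sum_card_filter_and_eq_mul_card {B C : Type*} [Fintype B] [Fintype C]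
    (adj : C → B → Prop) [∀ c b, Decidable (adj c b)] {s : ℕ} (hdeg : ∀ b, #{c | adj c b} = s)
    (P : B → Prop) [DecidablePred P] :
    ∑ c, #{b | adj c b ∧ P b} = s * #{b | P b} := by
  calc ∑ c, #{b | adj c b ∧ P b} = ∑ b, #{c | adj c b ∧ P b} :=
        sum_card_bipartiteAbove_eq_sum_card_bipartiteBelow _
    _ = ∑ b ∈ {b | P b}, s := by
        rw [sum_filter]
        refine sum_congr rfl fun b _ => ?_
        by_cases hb : P b <;> simp [hb, hdeg]
    _ = s * #{b | P b} := by rw [sum_const, smul_eq_mul, mul_comm]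

lemma parityCheck_mulVec_apply {B C : Type*} [Fintype B] (adj : C → B → Prop)
    [∀ c b, Decidable (adj c b)] (v : B → ZMod 2) (c : C) :
    ((fun c b => if adj c b then (1 : ZMod 2) else 0 : Matrix C B (ZMod 2)) *ᵥ v) c
      = #{b | adj c b ∧ v b ≠ 0} := by
  simp only [mulVec, dotProduct, ite_mul, one_mul, zero_mul]
  rw [← sum_filter, sum_zmod_two_eq_card_filter_ne_zero, filter_filter]

lemma hammingNorm_parityCheck_mulVec {B C : Type*} [Fintype B] [Fintype C] (adj : C → B → Prop)
    [∀ c b, Decidable (adj c b)] (v : B → ZMod 2) :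
    hammingNorm ((fun c b => if adj c b then (1 : ZMod 2) else 0 : Matrix C B (ZMod 2)) *ᵥ v)
      = #{c | Odd #{b | adj c b ∧ v b ≠ 0}} := by
  simp only [hammingNorm, parityCheck_mulVec_apply, Ne, ZMod.natCast_eq_zero_iff_even,
    Nat.not_even_iff_odd]

theorem stmt8_general {B C : Type*} [Fintype B] [Fintype C] [DecidableEq B] [DecidableEq C]
    (adj : C → B → Prop) [∀ c b, Decidable (adj c b)]
    (s dt : ℕ) (hs : 2 ≤ s)
    (hdegB : ∀ b : B, (Finset.univ.filter (fun c : C => adj c b)).card = s)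
    (hgirth : (2 * dt : ℕ) < (tannerGraph adj).girth) :
    ∀ v : B → ZMod 2, v ≠ 0 → hammingNorm v ≤ dt →
      s ≤ hammingNorm ((fun c b => if adj c b then (1 : ZMod 2) else 0 : Matrix C B (ZMod 2)) *ᵥ v) := by
  intro v hv hwt
  let a : C → B → Prop := fun c b => adj c b ∧ v b ≠ 0
  have hcheck (b : B) : ∃ c, adj c b := by
    obtain ⟨c, hc⟩ := card_pos.1 (hdegB b ▸ (by omega : 0 < s))
    exact ⟨c, (mem_filter.1 hc).2⟩
  have hsupp : #{b | ∃ c, a c b} = hammingNorm v :=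
    congrArg card (filter_congr fun b _ => ⟨fun ⟨_, h⟩ => h.2, fun hb => (hcheck b).imp
      fun _ hc => ⟨hc, hb⟩⟩)
  have hacyc : (tannerGraph a).IsAcyclic :=
    isAcyclic_tannerGraph_of_lt_girth (fun _ _ h => h.1) (S := {b | ∃ c, a c b})
      (fun c b h => by simpa using ⟨c, h⟩) (by omega)
  obtain ⟨b, hb⟩ := Function.ne_iff.1 hv
  have hforest := sum_card_lt_of_isAcyclic_tannerGraph hacyc
    ((hcheck b).imp fun _ hc => ⟨b, hc, hb⟩)
  have hparity := two_mul_card_filter_pos_le univ fun c => #{b | a c b}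
  simp only [card_pos, filter_nonempty_iff, mem_univ, true_and] at hparity
  rw [hammingNorm_parityCheck_mulVec]
  have hinc : ∑ c, #{b | a c b} = s * hammingNorm v :=
    sum_card_filter_and_eq_mul_card adj hdegB _
  have hn := hammingNorm_pos_iff.2 hv
  nlinarith

/-- if every bit vertex has degree `s ≥ 2`, every check vertex has
degree `w`, and the Tanner graph has girth `> 2·d̃`, then the associated parity
check matrix is `(d̃, s)`-sensitive: every nonzero `v` with `|v| ≤ d̃` violates
at least `s` checks. -/
theorem stmt8 {B C : Type*} [Fintype B] [Fintype C] [DecidableEq B] [DecidableEq C]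
    (adj : C → B → Prop) [∀ c b, Decidable (adj c b)]
    (s w dt : ℕ) (hs : 2 ≤ s)
    (hdegB : ∀ b : B, (Finset.univ.filter (fun c : C => adj c b)).card = s)
    (hdegC : ∀ c : C, (Finset.univ.filter (fun b : B => adj c b)).card = w)
    (hgirth : (2 * dt : ℕ) < (tannerGraph adj).girth) :
    ∀ v : B → ZMod 2, v ≠ 0 → hammingNorm v ≤ dt →
      s ≤ hammingNorm ((fun c b => if adj c b then (1 : ZMod 2) else 0 : Matrix C B (ZMod 2)) *ᵥ v) :=
  stmt8_general adj s dt hs hdegB hgirth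
end

section
/- Let p be an odd prime and let Q = F_p^n be equipped with a non-degenerate symmetric bilinear form whose Gram matrix is Λ' ⊕ Λ_{2m}, where Λ_{2m} is the orthogonal sum of m hyperbolic planes (form ½[[0,1],[1,0]] ⊗ I_m) and Λ' is definite (anisotropic) of dimension n − 2m. Then the number of isotropic (null) vectors of Q equals p^{n−1} − p^{n−m−1} + p^m. -/
open Matrix Finset

lemma fiber_card (p m : ℕ) [Fact p.Prime] (u : Fin m → ZMod p) (hu : u ≠ 0) (c : ZMod p) :
    Fintype.card {u' : Fin m → ZMod p // u ⬝ᵥ u' = c} = p ^ (m - 1) := by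
  obtain ⟨i, hi⟩ : ∃ i, u i ≠ 0 := by
    by_contra h; push_neg at h; exact hu (funext h)
  set w : Fin m → ZMod p := Pi.single i (u i)⁻¹ with hw
  have hw1 : u ⬝ᵥ w = 1 := by
    simp [hw, dotProduct_single, hi]
  have key : ∀ c d : ZMod p,
      Fintype.card {u' : Fin m → ZMod p // u ⬝ᵥ u' = c}
        = Fintype.card {u' : Fin m → ZMod p // u ⬝ᵥ u' = d} := by
    intro c d
    apply Fintype.card_congr
    refine ⟨fun x => ⟨x.1 + (d - c) • w, ?_⟩, fun x => ⟨x.1 + (c - d) • w, ?_⟩, ?_, ?_⟩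
    · simp [dotProduct_add, dotProduct_smul, x.2, hw1, smul_eq_mul]
    · simp [dotProduct_add, dotProduct_smul, x.2, hw1, smul_eq_mul]
    · intro x; ext : 1; dsimp only; rw [add_assoc, ← add_smul]; simp
    · intro x; ext : 1; dsimp only; rw [add_assoc, ← add_smul]; simp
  have hm : 1 ≤ m := by
    rcases Nat.eq_zero_or_pos m with h | h
    · subst h; exact absurd (Subsingleton.elim u 0) hu
    · exact h
  have htot : (p : ℕ) ^ m = ∑ c : ZMod p, Fintype.card {u' : Fin m → ZMod p // u ⬝ᵥ u' = c} := by
    rw [← Fintype.card_sigma]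
    rw [Fintype.card_congr (Equiv.sigmaFiberEquiv (fun u' : Fin m → ZMod p => u ⬝ᵥ u'))]
    simp [ZMod.card]
  have hconst : ∑ c : ZMod p, Fintype.card {u' : Fin m → ZMod p // u ⬝ᵥ u' = c}
      = p * Fintype.card {u' : Fin m → ZMod p // u ⬝ᵥ u' = 0} := by
    rw [Finset.sum_congr rfl (fun d _ => key d 0)]
    simp [ZMod.card, mul_comm]
  have hppos : 0 < p := (Fact.out : p.Prime).pos
  have hstep : p * Fintype.card {u' : Fin m → ZMod p // u ⬝ᵥ u' = 0} = p * p ^ (m - 1) := by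
    rw [← hconst, ← htot, ← pow_succ']
    congr 1
    omega
  have h0 := Nat.eq_of_mul_eq_mul_left hppos hstep
  rw [key c 0, h0]

/-- let `p` be an odd prime and equip
`Q = F_p^r × F_p^m × F_p^m` (of dimension `n = r + 2m`) with the quadratic form
`x'·Λ'x' + u·u'`, where `Λ'` is a symmetric, invertible, definite (anisotropic)
`r × r` Gram matrix and the last `2m` coordinates form `m` hyperbolic planes.
Then the number of null (isotropic) vectors equals `p^{n-1} - p^{n-m-1} + p^m`
(stated additively to avoid truncated subtraction). -/
theorem stmt14 (p : ℕ) [Fact p.Prime] (hp : p ≠ 2) (r m : ℕ)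
    (Λ' : Matrix (Fin r) (Fin r) (ZMod p))
    (hsym : Λ'.IsSymm) (hunit : IsUnit Λ')
    (hdef : ∀ x : Fin r → ZMod p, x ⬝ᵥ (Λ' *ᵥ x) = 0 → x = 0) :
    Nat.card {x : (Fin r → ZMod p) × (Fin m → ZMod p) × (Fin m → ZMod p) //
        x.1 ⬝ᵥ (Λ' *ᵥ x.1) + x.2.1 ⬝ᵥ x.2.2 = 0}
      + p ^ (r + 2 * m - m - 1)
      = p ^ (r + 2 * m - 1) + p ^ m := by
  classical
  rcases Nat.eq_zero_or_pos m with hm0 | hm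
  · subst hm0
    have hone : Nat.card {x : (Fin r → ZMod p) × (Fin 0 → ZMod p) × (Fin 0 → ZMod p) //
        x.1 ⬝ᵥ (Λ' *ᵥ x.1) + x.2.1 ⬝ᵥ x.2.2 = 0} = 1 := by
      rw [Nat.card_eq_fintype_card]
      have hiff : ∀ x : (Fin r → ZMod p) × (Fin 0 → ZMod p) × (Fin 0 → ZMod p),
          (x.1 ⬝ᵥ (Λ' *ᵥ x.1) + x.2.1 ⬝ᵥ x.2.2 = 0) ↔ x = 0 := by
        rintro ⟨a, b, c⟩
        constructor
        · intro h
          have h2 : b ⬝ᵥ c = 0 := by simp [dotProduct]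
          rw [h2, add_zero] at h
          have ha := hdef _ h
          simp [Prod.ext_iff, Subsingleton.elim b 0, Subsingleton.elim c 0]
          exact ha
        · rintro h
          rw [Prod.ext_iff, Prod.ext_iff] at h
          obtain ⟨h1, h2, h3⟩ := h
          simp only at h1 h2 h3
          subst h1; simp
      simp only [hiff]
      exact Fintype.card_subtype_eq (0 : (Fin r → ZMod p) × (Fin 0 → ZMod p) × (Fin 0 → ZMod p))
    rw [hone]
    simp [Nat.mul_zero, Nat.add_zero, Nat.sub_zero, pow_zero, Nat.add_comm]
  · -- main case
    have hcard : Nat.card {x : (Fin r → ZMod p) × (Fin m → ZMod p) × (Fin m → ZMod p) //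
        x.1 ⬝ᵥ (Λ' *ᵥ x.1) + x.2.1 ⬝ᵥ x.2.2 = 0}
        = p ^ m + p ^ r * ((p ^ m - 1) * p ^ (m - 1)) := by
      rw [Nat.card_eq_fintype_card]
      have e : {x : (Fin r → ZMod p) × (Fin m → ZMod p) × (Fin m → ZMod p) //
          x.1 ⬝ᵥ (Λ' *ᵥ x.1) + x.2.1 ⬝ᵥ x.2.2 = 0}
          ≃ Σ y : (Fin r → ZMod p) × (Fin m → ZMod p),
              {u' : Fin m → ZMod p // y.2 ⬝ᵥ u' = -(y.1 ⬝ᵥ (Λ' *ᵥ y.1))} := by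
        refine ⟨fun x => ⟨(x.1.1, x.1.2.1), ⟨x.1.2.2, ?_⟩⟩,
               fun y => ⟨(y.1.1, y.1.2, y.2.1), ?_⟩, fun x => rfl, fun y => rfl⟩
        · have := x.2; linear_combination this
        · have := y.2.2; linear_combination this
      rw [Fintype.card_congr e, Fintype.card_sigma]
      rw [Fintype.sum_prod_type]
      have hterm : ∀ x' : Fin r → ZMod p,
          (∑ u : Fin m → ZMod p,
            Fintype.card {u' : Fin m → ZMod p // u ⬝ᵥ u' = -(x' ⬝ᵥ (Λ' *ᵥ x'))})
          = (if x' = 0 then p ^ m else 0) + (p ^ m - 1) * p ^ (m - 1) := by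
        intro x'
        rw [← Finset.add_sum_erase _ _ (Finset.mem_univ (0 : Fin m → ZMod p))]
        congr 1
        · by_cases hx : x' = 0
          · subst hx
            rw [if_pos rfl]
            have hall : ∀ u' : Fin m → ZMod p,
                ((0 : Fin m → ZMod p) ⬝ᵥ u' = -((0 : Fin r → ZMod p) ⬝ᵥ (Λ' *ᵥ 0))) := by
              intro u'; simp
            rw [Fintype.card_congr (Equiv.subtypeUnivEquiv hall)]
            simp [ZMod.card]
          · rw [if_neg hx, Fintype.card_eq_zero_iff]
            refine ⟨fun y => ?_⟩
            have h := y.2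
            exact hx (hdef _ (by simpa using h.symm))
        · rw [Finset.sum_congr rfl (fun u hu => fiber_card p m u (Finset.ne_of_mem_erase hu) _)]
          rw [Finset.sum_const, smul_eq_mul]
          congr 1
          rw [Finset.card_erase_of_mem (Finset.mem_univ _)]
          simp [ZMod.card]
      rw [Finset.sum_congr rfl (fun x' _ => hterm x')]
      rw [Finset.sum_add_distrib, Finset.sum_ite_eq' Finset.univ (0 : Fin r → ZMod p)]
      simp [ZMod.card, mul_comm]
    rw [hcard]
    have h1 : 1 ≤ p ^ m := Nat.one_le_pow _ _ (Fact.out : p.Prime).pos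
    have e1 : r + 2 * m - m - 1 = r + (m - 1) := by omega
    have e2 : r + 2 * m - 1 = r + m + (m - 1) := by omega
    have e3 : p ^ m = p * p ^ (m - 1) := by
      rw [← pow_succ']; congr 1; omega
    rw [e1, e2, pow_add, pow_add, pow_add]
    zify [h1]
    ring
end

section
/- Let p be an odd prime and Q a non-degenerate quadratic space over F_p of dimension n with maximal null subspaces of dimension m. For any null subspace N of dimension k ≤ m, the number of null vectors of Q orthogonal to N equals p^{n−k−1} + p^m − p^{n−m−1}. -/
/-!
Write `Z(N)` for the number of null vectors orthogonal to `N` and `q = |K|`. If `w` is a null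
vector orthogonal to `N`, the form on a line `x + K w` with `x ∈ N^⊥` is `t ↦ B x x + 2 t B w x`,
so each such line with `B w x ≠ 0` carries exactly one null vector. Counting these lines gives
`Z(N) q + |(N + K w)^⊥| = Z(N + K w) q + |N^⊥|`, hence `Z(N) q - |N^⊥|` is the same for every
totally isotropic `N`. For a maximal one `W`, every null vector orthogonal to `W` lies in `W`, so
`Z(W) = q^m`; comparing `N` with `W` and using `|N^⊥| = q^(n-k)` gives the formula.
-/

open Module Submodule

namespace LinearMap.BilinForm

variable {K V : Type*} [Field K] [AddCommGroup V] [Module K V] {B : LinearMap.BilinForm K V}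
  {N W : Submodule K V} {w x : V}

def IsTotallyIsotropic (B : LinearMap.BilinForm K V) (N : Submodule K V) : Prop :=
  ∀ x ∈ N, ∀ y ∈ N, B x y = 0

def nullOrthogonal (B : LinearMap.BilinForm K V) (N : Submodule K V) : Set V :=
  {x | B x x = 0 ∧ x ∈ B.orthogonal N}

theorem mem_orthogonal_sup_span_singleton :
    x ∈ B.orthogonal (N ⊔ K ∙ w) ↔ x ∈ B.orthogonal N ∧ B w x = 0 := by
  refine ⟨fun h => ⟨orthogonal_le le_sup_left h, h w (mem_sup_right (mem_span_singleton_self w))⟩,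
    fun ⟨hN, hw⟩ v hv => ?_⟩
  obtain ⟨a, ha, b, hb, rfl⟩ := mem_sup.mp hv
  obtain ⟨c, rfl⟩ := mem_span_singleton.mp hb
  simp [hN a ha, hw]

theorem apply_add_smul_self (hB : B.IsSymm) (hww : B w w = 0) (x : V) (t : K) :
    B (x + t • w) (x + t • w) = B x x + 2 * t * B w x := by
  simp only [map_add, map_smul, LinearMap.add_apply, LinearMap.smul_apply, smul_eq_mul, hww,
    hB.eq x w]
  ring

theorem apply_add_smul_right (hww : B w w = 0) (x : V) (t : K) : B w (x + t • w) = B w x := by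
  simp [hww]

def nullOrthogonalDiffProdEquiv (hB : B.IsSymm) (h2 : (2 : K) ≠ 0) (hww : B w w = 0)
    (hw : w ∈ B.orthogonal N) :
    ↥(B.nullOrthogonal N \ {x | B w x = 0}) × K ≃
      ↥((B.orthogonal N : Set V) \ {x | B w x = 0}) where
  toFun xt := ⟨xt.1 + xt.2 • w, add_mem xt.1.2.1.2 (smul_mem _ _ hw),
    (apply_add_smul_right hww _ _).trans_ne xt.1.2.2⟩
  invFun y :=
    have hy : B w y ≠ 0 := y.2.2
    have hnull : B (y + (-(B y y / (2 * B w y))) • w) (y + (-(B y y / (2 * B w y))) • w) = 0 := by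
      rw [apply_add_smul_self hB hww]
      field_simp
      ring
    ⟨⟨_, ⟨hnull, add_mem y.2.1 (smul_mem _ _ hw)⟩, (apply_add_smul_right hww _ _).trans_ne hy⟩,
      B y y / (2 * B w y)⟩
  left_inv := by
    rintro ⟨⟨x, ⟨hxx, -⟩, hwx⟩, t⟩
    have hwx : B w x ≠ 0 := hwx
    have ht : B (x + t • w) (x + t • w) / (2 * B w (x + t • w)) = t := by
      rw [apply_add_smul_self hB hww, apply_add_smul_right hww, hxx, zero_add]
      field_simp
    refine Prod.ext (Subtype.ext ?_) ht
    change x + t • w + (-(B (x + t • w) (x + t • w) / (2 * B w (x + t • w)))) • w = x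
    rw [ht, add_assoc, ← add_smul, add_neg_cancel, zero_smul, add_zero]
  right_inv y := by ext; simp

theorem ncard_nullOrthogonal_mul_add_ncard_orthogonal_sup [Finite V] (hB : B.IsSymm)
    (h2 : (2 : K) ≠ 0) (hww : B w w = 0) (hw : w ∈ B.orthogonal N) :
    (B.nullOrthogonal N).ncard * Nat.card K + (B.orthogonal (N ⊔ K ∙ w) : Set V).ncard =
      (B.nullOrthogonal (N ⊔ K ∙ w)).ncard * Nat.card K + (B.orthogonal N : Set V).ncard := by
  have hlines := Nat.card_congr (nullOrthogonalDiffProdEquiv hB h2 hww hw)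
  rw [Nat.card_prod, Nat.card_coe_set_eq, Nat.card_coe_set_eq] at hlines
  have horth : (B.orthogonal N : Set V) ∩ {x | B w x = 0} = B.orthogonal (N ⊔ K ∙ w) :=
    Set.ext fun _ => mem_orthogonal_sup_span_singleton.symm
  have hnull : B.nullOrthogonal N ∩ {x | B w x = 0} = B.nullOrthogonal (N ⊔ K ∙ w) :=
    Set.ext fun _ => and_assoc.trans (and_congr_right' mem_orthogonal_sup_span_singleton.symm)
  rw [← Set.ncard_inter_add_ncard_sdiff_eq_ncard (B.nullOrthogonal N) {x | B w x = 0},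
    ← Set.ncard_inter_add_ncard_sdiff_eq_ncard (B.orthogonal N : Set V) {x | B w x = 0},
    hnull, horth, ← hlines]
  ring

theorem ncard_nullOrthogonal_mul_add_card [Finite V] (hB : B.IsSymm) (h2 : (2 : K) ≠ 0)
    (hN : B.IsTotallyIsotropic N) :
    (B.nullOrthogonal N).ncard * Nat.card K + Nat.card V =
      (B.nullOrthogonal ⊥).ncard * Nat.card K + (B.orthogonal N : Set V).ncard := by
  suffices ∀ s : Finset V, (s : Set V) ⊆ N →
      (B.nullOrthogonal (span K s)).ncard * Nat.card K + Nat.card V =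
        (B.nullOrthogonal ⊥).ncard * Nat.card K + (B.orthogonal (span K s) : Set V).ncard by
    simpa using this (Set.toFinite (N : Set V)).toFinset (by simp)
  classical
  intro s
  induction s using Finset.induction_on with
  | empty => simp
  | insert a s _ ih =>
    intro hs
    rw [Finset.coe_insert, Set.insert_subset_iff] at hs
    have hsN : span K s ≤ N := span_le.mpr hs.2
    have hstep := ncard_nullOrthogonal_mul_add_ncard_orthogonal_sup hB h2 (hN a hs.1 a hs.1)
      (fun n hn => hN n (hsN hn) a hs.1)
    rw [Finset.coe_insert, span_insert, sup_comm]
    have := ih hs.2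
    omega

theorem ncard_nullOrthogonal_mul_add_ncard_orthogonal [Finite V] (hB : B.IsSymm)
    (h2 : (2 : K) ≠ 0) (hN : B.IsTotallyIsotropic N) (hW : B.IsTotallyIsotropic W) :
    (B.nullOrthogonal N).ncard * Nat.card K + (B.orthogonal W : Set V).ncard =
      (B.nullOrthogonal W).ncard * Nat.card K + (B.orthogonal N : Set V).ncard := by
  have := ncard_nullOrthogonal_mul_add_card hB h2 hN
  have := ncard_nullOrthogonal_mul_add_card hB h2 hW
  omega

theorem IsTotallyIsotropic.sup_span_singleton (hB : B.IsRefl) (hN : B.IsTotallyIsotropic N)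
    (hxx : B x x = 0) (hx : x ∈ B.orthogonal N) : B.IsTotallyIsotropic (N ⊔ K ∙ x) := by
  intro y hy z hz
  obtain ⟨a, ha, y', hy', rfl⟩ := mem_sup.mp hy
  obtain ⟨b, hb, z', hz', rfl⟩ := mem_sup.mp hz
  obtain ⟨c, rfl⟩ := mem_span_singleton.mp hy'
  obtain ⟨d, rfl⟩ := mem_span_singleton.mp hz'
  simp [hN a ha b hb, hx a ha, hB _ _ (hx b hb), hxx]

theorem nullOrthogonal_eq_of_maximal (hB : B.IsRefl) (hW : Maximal B.IsTotallyIsotropic W) :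
    B.nullOrthogonal W = W := by
  ext x
  refine ⟨fun ⟨hxx, hx⟩ => ?_, fun hx => ⟨hW.1 x hx x hx, fun n hn => hW.1 n hn x hx⟩⟩
  exact hW.2 (hW.1.sup_span_singleton hB hxx hx) le_sup_left
    (mem_sup_right (mem_span_singleton_self x))

theorem IsTotallyIsotropic.two_mul_finrank_le [FiniteDimensional K V] (hB : B.Nondegenerate)
    (hN : B.IsTotallyIsotropic N) : 2 * finrank K N ≤ finrank K V := by
  have hle := finrank_mono (show N ≤ B.orthogonal N from fun x hx n hn => hN n hn x hx)
  rw [finrank_orthogonal hB] at hle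
  have := N.finrank_le
  omega

theorem ncard_coe_submodule [Finite V] (N : Submodule K V) :
    (N : Set V).ncard = Nat.card K ^ finrank K N := by
  rw [← Nat.card_coe_set_eq, SetLike.coe_sort_coe, natCard_eq_pow_finrank (K := K)]

theorem ncard_orthogonal [Finite V] (hB : B.Nondegenerate) (N : Submodule K V) :
    (B.orthogonal N : Set V).ncard = Nat.card K ^ (finrank K V - finrank K N) := by
  rw [ncard_coe_submodule, finrank_orthogonal hB]

theorem ncard_nullOrthogonal_add_pow [Finite K] [Finite V] (hB : B.IsSymm)
    (hBnd : B.Nondegenerate) (h2 : (2 : K) ≠ 0) (hN : B.IsTotallyIsotropic N)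
    (hW : Maximal B.IsTotallyIsotropic W) :
    (B.nullOrthogonal N).ncard + Nat.card K ^ (finrank K V - finrank K W - 1) =
      Nat.card K ^ (finrank K V - finrank K N - 1) + Nat.card K ^ finrank K W := by
  have key := ncard_nullOrthogonal_mul_add_ncard_orthogonal hB h2 hN hW.1
  rw [nullOrthogonal_eq_of_maximal hB.isRefl hW, ncard_orthogonal hBnd, ncard_orthogonal hBnd,
    ncard_coe_submodule] at key
  have hk := hN.two_mul_finrank_le hBnd
  have hm := hW.1.two_mul_finrank_le hBnd
  have hq : 0 < Nat.card K := Nat.card_pos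
  generalize finrank K V = n, finrank K N = k, finrank K W = m, Nat.card K = q at *
  rcases Nat.eq_zero_or_pos n with rfl | hn
  -- for `n = 0` the exponents `n - m - 1` truncate to `0`, so `q` cannot be cancelled
  · obtain ⟨rfl, rfl⟩ : k = 0 ∧ m = 0 := by omega
    simpa [hq.ne'] using key
  · rw [show n - m = n - m - 1 + 1 by omega, show n - k = n - k - 1 + 1 by omega, pow_succ,
      pow_succ] at key
    exact Nat.eq_of_mul_eq_mul_right hq (by linarith)

end LinearMap.BilinForm

open Matrix LinearMap.BilinForm

theorem stmt15_general (p : ℕ) [Fact p.Prime] (hp : p ≠ 2) (n m k : ℕ)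
    (Λ : Matrix (Fin n) (Fin n) (ZMod p)) (hsym : Λ.IsSymm) (hunit : IsUnit Λ)
    (hm_bound : ∀ W : Submodule (ZMod p) (Fin n → ZMod p),
      (∀ x ∈ W, ∀ y ∈ W, x ⬝ᵥ (Λ *ᵥ y) = 0) → Module.finrank (ZMod p) W ≤ m)
    (hm_exists : ∃ W : Submodule (ZMod p) (Fin n → ZMod p),
      (∀ x ∈ W, ∀ y ∈ W, x ⬝ᵥ (Λ *ᵥ y) = 0) ∧ Module.finrank (ZMod p) W = m)
    (N : Submodule (ZMod p) (Fin n → ZMod p))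
    (hN : ∀ x ∈ N, ∀ y ∈ N, x ⬝ᵥ (Λ *ᵥ y) = 0)
    (hk : Module.finrank (ZMod p) N = k) :
    Nat.card {x : Fin n → ZMod p //
        x ⬝ᵥ (Λ *ᵥ x) = 0 ∧ ∀ w ∈ N, x ⬝ᵥ (Λ *ᵥ w) = 0}
      + p ^ (n - m - 1)
      = p ^ (n - k - 1) + p ^ m := by
  set B := Λ.toBilin'
  have hB : B.IsSymm := isSymm_toBilin'_iff_isSymm.mpr hsym
  have hBnd : B.Nondegenerate :=
    nondegenerate_toBilin'_iff_det_ne_zero.mpr ((isUnit_iff_isUnit_det Λ).mp hunit).ne_zero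
  have h2 : (2 : ZMod p) ≠ 0 := Ring.two_ne_zero (by rwa [ZMod.ringChar_zmod_n])
  simp only [← toBilin'_apply'] at hm_bound hm_exists hN ⊢
  obtain ⟨W, hW, rfl⟩ := hm_exists
  have hWmax : Maximal B.IsTotallyIsotropic W :=
    ⟨hW, fun W' hW' hle => (Submodule.eq_of_le_of_finrank_le hle (hm_bound W' hW')).ge⟩
  have hcard : Nat.card {x // B x x = 0 ∧ ∀ w ∈ N, B x w = 0} = (B.nullOrthogonal N).ncard :=
    Nat.card_congr (Equiv.subtypeEquivRight fun _ =>
      and_congr_right fun _ => forall₂_congr fun _ _ => hB.eq_iff)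
  have h := ncard_nullOrthogonal_add_pow hB hBnd h2 hN hWmax
  rwa [Nat.card_zmod, finrank_fin_fun, hk, ← hcard] at h

/-- let `Q = F_p^n` (`p` an odd prime) carry a non-degenerate
symmetric bilinear form with Gram matrix `Λ`, whose maximal null subspaces have
dimension `m`.  For any null subspace `N` of dimension `k ≤ m`, the number of
null vectors orthogonal to `N` is `p^{n-k-1} + p^m - p^{n-m-1}` (stated
additively to avoid truncated subtraction). -/
theorem stmt15 (p : ℕ) [Fact p.Prime] (hp : p ≠ 2) (n m k : ℕ)
    (Λ : Matrix (Fin n) (Fin n) (ZMod p)) (hsym : Λ.IsSymm) (hunit : IsUnit Λ)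
    (hm_bound : ∀ W : Submodule (ZMod p) (Fin n → ZMod p),
      (∀ x ∈ W, ∀ y ∈ W, x ⬝ᵥ (Λ *ᵥ y) = 0) → Module.finrank (ZMod p) W ≤ m)
    (hm_exists : ∃ W : Submodule (ZMod p) (Fin n → ZMod p),
      (∀ x ∈ W, ∀ y ∈ W, x ⬝ᵥ (Λ *ᵥ y) = 0) ∧ Module.finrank (ZMod p) W = m)
    (N : Submodule (ZMod p) (Fin n → ZMod p))
    (hN : ∀ x ∈ N, ∀ y ∈ N, x ⬝ᵥ (Λ *ᵥ y) = 0)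
    (hk : Module.finrank (ZMod p) N = k) (hkm : k ≤ m) :
    Nat.card {x : Fin n → ZMod p //
        x ⬝ᵥ (Λ *ᵥ x) = 0 ∧ ∀ w ∈ N, x ⬝ᵥ (Λ *ᵥ w) = 0}
      + p ^ (n - m - 1)
      = p ^ (n - k - 1) + p ^ m :=
  stmt15_general p hp n m k Λ hsym hunit hm_bound hm_exists N hN hk
end
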